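/- For all n ≥ 4, ∑_{j=1}^{n-2} 3·a(n-2, j) ≤ φ(n-1). -/

import Mathlib

/-- `F n = (a n ·, b n ·, φ n)` from the recursive construction;
    `φ 1 := 1` by convention. -/
def F : ℕ → ((ℕ → ℚ) × (ℕ → ℚ) × ℚ)
  | 0 => (fun _ => 0, fun _ => 0, 1)
  | 1 => (fun j => if j = 1 then 1 else 0, fun j => if j = 1 then 1 else 0, 1)
  | (n+2) =>
      let p := F (n+1)
      let th : ℚ := 3 * p.1 (n+1)
      let ph : ℚ := if n = 0 then 4
        else 4 * ∑ j ∈ Finset.Icc 1 (n+1), (th * p.2.1 j - 3 * p.1 j)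
      (fun j => if j = n+2 then ph else 4 * p.1 j,
       fun j => if j = n+2 then 1 else (1 + th) * p.2.1 j,
       ph)

/-- coefficient `a(n,j)` -/
def a (n j : ℕ) : ℚ := (F n).1 j
/-- coefficient `b(n,j)` -/
def b (n j : ℕ) : ℚ := (F n).2.1 j
/-- `φ(n)` -/
def phi (n : ℕ) : ℚ := (F n).2.2
/-- `θ(n) = 3·a(n-1,n-1)` -/
def theta (n : ℕ) : ℚ := 3 * a (n-1) (n-1)

/-!
On each level `N ≥ 1` the diagonal entry `A = a(N,N)` is at least `1` and dominates the row
`a(N,·)`, while `b(N,j) ≥ 1`, and `b(N,j) ≥ 4` for `j < N` since it carries a factor `1 + θ ≥ 4`.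
So every summand `3A·b(N,j) - 3a(N,j)` of `φ(N+1)` is nonnegative, and at least `9A` for `j < N`;
hence `φ(N+1) ≥ 4A`, which carries the bounds over to level `N+1`. For `N ≥ 2` the diagonal
summand vanishes (`b(N,N) = 1`), but four times the summand at `j = 1` already covers both
`3a(N,1)` and the extra diagonal term `3a(N,N)` of the row sum.
-/

open Finset

section Recurrence

variable {N j : ℕ}

lemma a_one_one : a 1 1 = 1 := rfl

lemma phi_two : phi 2 = 4 := rfl

lemma phi_succ (hN : 2 ≤ N) :
    phi (N + 1) = 4 * ∑ j ∈ Icc 1 N, (3 * a N N * b N j - 3 * a N j) := by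
  obtain ⟨m, rfl⟩ : ∃ m, N = m + 2 := ⟨N - 2, by omega⟩
  show ite (m + 1 = 0) 4 _ = _
  exact if_neg m.succ_ne_zero

lemma a_succ_self (hN : 1 ≤ N) : a (N + 1) (N + 1) = phi (N + 1) := by
  obtain ⟨m, rfl⟩ : ∃ m, N = m + 1 := ⟨N - 1, by omega⟩
  exact if_pos rfl

lemma a_succ_of_ne (hN : 1 ≤ N) (hj : j ≠ N + 1) : a (N + 1) j = 4 * a N j := by
  obtain ⟨m, rfl⟩ : ∃ m, N = m + 1 := ⟨N - 1, by omega⟩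
  exact if_neg hj

lemma b_self (hN : 1 ≤ N) : b N N = 1 := by
  obtain ⟨_ | m, rfl⟩ : ∃ m, N = m + 1 := ⟨N - 1, by omega⟩
  · rfl
  · exact if_pos rfl

lemma b_succ_of_ne (hN : 1 ≤ N) (hj : j ≠ N + 1) :
    b (N + 1) j = (1 + 3 * a N N) * b N j := by
  obtain ⟨m, rfl⟩ : ∃ m, N = m + 1 := ⟨N - 1, by omega⟩
  exact if_neg hj

end Recurrence

structure LevelBounds (N : ℕ) : Prop where
  one_le_diag : 1 ≤ a N N
  le_diag : ∀ j ∈ Icc 1 N, a N j ≤ a N N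
  one_le_b : ∀ j ∈ Icc 1 N, 1 ≤ b N j
  four_le_b : ∀ j ∈ Ico 1 N, 4 ≤ b N j

namespace LevelBounds

variable {N : ℕ} (h : LevelBounds N)
include h

lemma summand_nonneg {j : ℕ} (hj : j ∈ Icc 1 N) : 0 ≤ 3 * a N N * b N j - 3 * a N j := by
  have := h.le_diag j hj
  have := h.one_le_b j hj
  nlinarith [h.one_le_diag]

lemma nine_mul_diag_le_summand {j : ℕ} (hj : j ∈ Ico 1 N) :
    9 * a N N ≤ 3 * a N N * b N j - 3 * a N j := by
  have := h.le_diag j (Ico_subset_Icc_self hj)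
  have := h.four_le_b j hj
  nlinarith [h.one_le_diag]

lemma four_mul_diag_le_phi_succ (hN : 1 ≤ N) : 4 * a N N ≤ phi (N + 1) := by
  obtain rfl | hN := hN.eq_or_lt
  · rw [phi_two, a_one_one]; norm_num
  have h1 : (1 : ℕ) ∈ Ico 1 N := mem_Ico.mpr ⟨le_rfl, hN⟩
  calc 4 * a N N ≤ 4 * (3 * a N N * b N 1 - 3 * a N 1) := by
        linarith [h.nine_mul_diag_le_summand h1, h.one_le_diag]
    _ ≤ phi (N + 1) := by
        rw [phi_succ hN]
        gcongr
        exact single_le_sum (fun j hj ↦ h.summand_nonneg hj) (Ico_subset_Icc_self h1)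

lemma succ (hN : 1 ≤ N) : LevelBounds (N + 1) := by
  have hphi := h.four_mul_diag_le_phi_succ hN
  have hA := h.one_le_diag
  have four_le_b : ∀ j ∈ Ico 1 (N + 1), 4 ≤ b (N + 1) j := by
    intro j hj
    rw [Ico_add_one_right_eq_Icc] at hj
    rw [b_succ_of_ne hN (Nat.lt_succ_of_le (mem_Icc.mp hj).2).ne]
    nlinarith [h.one_le_b j hj]
  refine ⟨by rw [a_succ_self hN]; linarith, fun j hj ↦ ?_, fun j hj ↦ ?_, four_le_b⟩
  · obtain rfl | hne := eq_or_ne j (N + 1)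
    · exact le_rfl
    · rw [a_succ_of_ne hN hne, a_succ_self hN]
      linarith [h.le_diag j (by simp only [mem_Icc] at hj ⊢; omega)]
  · obtain rfl | hne := eq_or_ne j (N + 1)
    · rw [b_self (by omega)]
    · linarith [four_le_b j (by simp only [mem_Icc, mem_Ico] at hj ⊢; omega)]

lemma sum_three_mul_le_phi_succ (hN : 2 ≤ N) : ∑ j ∈ Icc 1 N, 3 * a N j ≤ phi (N + 1) := by
  have split (f : ℕ → ℚ) : ∑ j ∈ Icc 1 N, f j = ∑ j ∈ Ico 1 N, f j + f N := by
    rw [Icc_eq_cons_Ico (by omega), sum_cons, add_comm]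
  set g : ℕ → ℚ := fun j ↦ 4 * (3 * a N N * b N j - 3 * a N j) - 3 * a N j with hg
  have surplus (j : ℕ) (hj : j ∈ Ico 1 N) : 3 * a N N ≤ g j := by
    linarith [h.nine_mul_diag_le_summand hj, h.le_diag j (Ico_subset_Icc_self hj), h.one_le_diag]
  have h1 : (1 : ℕ) ∈ Ico 1 N := mem_Ico.mpr ⟨le_rfl, hN⟩
  have total : 3 * a N N ≤ ∑ j ∈ Ico 1 N, g j :=
    (surplus 1 h1).trans <|
      single_le_sum (fun j hj ↦ by linarith [surplus j hj, h.one_le_diag]) h1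
  simp only [hg] at total
  rw [sum_sub_distrib, ← mul_sum] at total
  rw [phi_succ hN, split, split, b_self (by omega)]
  linarith

end LevelBounds

lemma levelBounds_of_one_le {N : ℕ} (hN : 1 ≤ N) : LevelBounds N := by
  induction N, hN using Nat.le_induction with
  | base => exact ⟨a_one_one.ge, by simp, by simp [b_self], by simp⟩
  | succ N hN ih => exact ih.succ hN

theorem sum_a_bound (n : ℕ) (hn : 4 ≤ n) :
    ∑ j ∈ Finset.Icc 1 (n-2), 3 * a (n-2) j ≤ phi (n-1) := by
  obtain ⟨N, rfl⟩ : ∃ N, n = N + 2 := ⟨n - 2, by omega⟩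
  rw [show N + 2 - 2 = N by omega, show N + 2 - 1 = N + 1 by omega]
  exact (levelBounds_of_one_le (by omega)).sum_three_mul_le_phi_succ (by omega)
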